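/- Every maximal ideal of W of odd residue characteristic is principal. Precisely: if m is a maximal ideal of the ring W such that the element 2 = (2, 2, 2) of W does not lie in m, then m is a principal ideal of W. -/

import Mathlib

/-!
The element `2` lies in the conductor of `W ⊆ R`, i.e. `2 R ⊆ W`. If `m` is an ideal of `W` with
`m + 2 W = W`, write `1 = a + 2 w` with `a ∈ m`; then every `y ∈ m R ∩ W` satisfies
`y = y a + (2 w) y ∈ m`, so `m R ∩ W = m`. The rings `ℤ[√2]` and `ℤ[√3]` are norm-Euclidean, so `R`
is a principal ideal ring and `m R = x R` with `x` a unit modulo `2 R`. Such an `x` satisfies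
`x² ≡ 1 (mod 2 R)`, and after multiplication by the unit `(1, 1 + √2, 1)` if necessary it lies in
`W`. Finally, for `g ∈ W` with `g² ≡ 1 (mod 2 R)`, `g r ∈ W` forces `r = g (g r) - (g² - 1) r ∈ W`,
hence `m = m R ∩ W = g W`.
-/

abbrev Rng : Type := ℤ × Zsqrtd 2 × Zsqrtd 3

def Wset : Set Rng :=
  {p | p.1 ≡ p.2.1.re [ZMOD 2] ∧ p.1 ≡ p.2.2.re + p.2.2.im [ZMOD 2] ∧
       p.2.1.im ≡ p.2.2.im [ZMOD 2]}

private lemma modeq_iff (a b : ℤ) : a ≡ b [ZMOD 2] ↔ ((a : ZMod 2) = b) :=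
  (ZMod.intCast_eq_intCast_iff a b 2).symm

def W : Subring Rng where
  carrier := Wset
  zero_mem' := by refine ⟨?_, ?_, ?_⟩ <;> decide
  one_mem' := by refine ⟨?_, ?_, ?_⟩ <;> decide
  add_mem' := by
    rintro a b ⟨h1, h2, h3⟩ ⟨g1, g2, g3⟩
    refine ⟨h1.add g1, ?_, h3.add g3⟩
    simpa [add_add_add_comm] using h2.add g2
  neg_mem' := by
    rintro a ⟨h1, h2, h3⟩
    refine ⟨h1.neg, ?_, h3.neg⟩
    have := h2.neg
    simp only [Wset, Set.mem_setOf_eq, Prod.fst_neg, Prod.snd_neg, Zsqrtd.re_neg,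
      Zsqrtd.im_neg, Int.modEq_iff_dvd] at this ⊢
    omega
  mul_mem' := by
    rintro a b ⟨h1, h2, h3⟩ ⟨g1, g2, g3⟩
    simp only [Wset, Set.mem_setOf_eq, Prod.fst_mul, Prod.snd_mul, Zsqrtd.re_mul,
      Zsqrtd.im_mul, modeq_iff] at h1 h2 h3 g1 g2 g3 ⊢
    push_cast at h1 h2 h3 g1 g2 g3 ⊢
    have h0 : (2 : ZMod 2) = 0 := rfl
    refine ⟨?_, ?_, ?_⟩
    · rw [← h1, ← g1, h0]; ring
    · linear_combination (b.1 : ZMod 2) * h2 + ((a.2.2.re : ZMod 2) + a.2.2.im) * g2 -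
        ((a.2.2.im : ZMod 2) * b.2.2.im) * h0
    · linear_combination (b.2.1.im : ZMod 2) * h2 - (b.2.1.im : ZMod 2) * h1
        + (b.2.1.re : ZMod 2) * h3 + ((a.2.2.re : ZMod 2) + a.2.2.im) * g3
        + (a.2.2.im : ZMod 2) * g2 - (a.2.2.im : ZMod 2) * g1
        + ((a.2.2.im : ZMod 2) * b.2.2.im) * h0

lemma mem_W_iff (x : Rng) : x ∈ W ↔ x ∈ Wset := Iff.rfl

theorem Int.exists_abs_two_mul_sub_mul_le (a : ℤ) {n : ℤ} (hn : n ≠ 0) :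
    ∃ q : ℤ, |2 * (a - n * q)| ≤ |n| := by
  have hm : 0 < n.natAbs := Int.natAbs_pos.mpr hn
  refine ⟨n.sign * a.bdiv n.natAbs, ?_⟩
  have hsub : a - n * (n.sign * a.bdiv n.natAbs) = a.bmod n.natAbs := by
    rw [← mul_assoc, Int.mul_sign_self]
    linarith [Int.bdiv_add_bmod a n.natAbs]
  rw [hsub, abs_le, Int.abs_eq_natAbs]
  have := Int.le_bmod (x := a) hm
  have := Int.bmod_le (x := a) hm
  omega

theorem IsPrincipalIdealRing.of_exists_sub_mul_lt {R : Type*} [CommRing R] (f : R → ℕ)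
    (hf : ∀ x y : R, y ≠ 0 → ∃ q, f (x - q * y) < f y) : IsPrincipalIdealRing R := by
  refine ⟨fun I => ?_⟩
  by_cases hI : I = ⊥
  · exact hI ▸ bot_isPrincipal
  set s : Set R := {y | y ∈ I ∧ y ≠ 0}
  have hs : s.Nonempty := Submodule.exists_mem_ne_zero_of_ne_bot hI
  obtain ⟨hyI, hy0⟩ : Function.argminOn f s hs ∈ s := Function.argminOn_mem f s hs
  set y := Function.argminOn f s hs
  refine ⟨y, le_antisymm (fun x hx => ?_) ((Ideal.span_singleton_le_iff_mem I).mpr hyI)⟩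
  obtain ⟨q, hq⟩ := hf x y hy0
  have hr : x - q * y = 0 := by
    by_contra hr
    exact Function.not_lt_argminOn f s ⟨I.sub_mem hx (I.mul_mem_left q hyI), hr⟩ hq
  exact Ideal.mem_span_singleton'.mpr ⟨q, (sub_eq_zero.mp hr).symm⟩

namespace Zsqrtd

variable {d : ℤ}

theorem exists_abs_norm_sub_mul_lt (hd : 0 < d) (hd4 : d < 4) (x : ℤ√d) {y : ℤ√d}
    (hy : y.norm ≠ 0) : ∃ q : ℤ√d, |(x - q * y).norm| < |y.norm| := by
  set n := y.norm
  set z := x * star y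
  obtain ⟨q₁, hq₁⟩ := Int.exists_abs_two_mul_sub_mul_le z.re hy
  obtain ⟨q₂, hq₂⟩ := Int.exists_abs_two_mul_sub_mul_le z.im hy
  refine ⟨⟨q₁, q₂⟩, ?_⟩
  have hmul : (x - ⟨q₁, q₂⟩ * y) * star y = ⟨z.re - n * q₁, z.im - n * q₂⟩ := by
    have : y * star y = n := (norm_eq_mul_conj y).symm
    ext <;> simp [z, sub_mul, mul_assoc, this] <;> ring
  set r₁ := z.re - n * q₁
  set r₂ := z.im - n * q₂
  have hnorm : (x - ⟨q₁, q₂⟩ * y).norm * n = r₁ * r₁ - d * r₂ * r₂ := by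
    have := congrArg norm hmul
    rwa [norm_mul, norm_conj, norm_def] at this
  have h₁ : 4 * (r₁ * r₁) ≤ n * n := by nlinarith [sq_le_sq.mpr hq₁]
  have h₂ : 4 * (r₂ * r₂) ≤ n * n := by nlinarith [sq_le_sq.mpr hq₂]
  have hn : 0 < n * n := mul_self_pos.mpr hy
  have : |(x - ⟨q₁, q₂⟩ * y).norm| * |n| < |n| * |n| := by
    rw [← abs_mul, hnorm, ← abs_mul, abs_mul_self, abs_lt]
    constructor <;> nlinarith [mul_self_nonneg r₁, mul_self_nonneg r₂]
  exact lt_of_mul_lt_mul_right this (abs_nonneg n)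

theorem isPrincipalIdealRing_of_one_lt_of_lt_four (hd : 1 < d) (hd4 : d < 4) :
    IsPrincipalIdealRing (ℤ√d) := by
  have hsq : ∀ n : ℤ, d ≠ n * n := by
    rintro n rfl
    rcases le_or_gt |n| 1 with h | h <;> nlinarith [abs_mul_abs_self n, abs_nonneg n]
  refine .of_exists_sub_mul_lt (fun x => x.norm.natAbs) fun x y hy => ?_
  obtain ⟨q, hq⟩ := exists_abs_norm_sub_mul_lt (by omega) hd4 x (mt (norm_eq_zero hsq y).mp hy)
  exact ⟨q, by zify; exact hq⟩

instance : IsPrincipalIdealRing (ℤ√2) :=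
  isPrincipalIdealRing_of_one_lt_of_lt_four (by norm_num) (by norm_num)

instance : IsPrincipalIdealRing (ℤ√3) :=
  isPrincipalIdealRing_of_one_lt_of_lt_four (by norm_num) (by norm_num)

theorem odd_re_add_mul_im_of_isCoprime_two {z : ℤ√d} (hz : IsCoprime z 2) :
    Odd (z.re + d * z.im) := by
  have hd : (d : ZMod 2) * d = d := by generalize (d : ZMod 2) = a; revert a; decide
  have := hz.map (lift ⟨(d : ZMod 2), hd⟩)
  rw [map_ofNat, show (2 : ZMod 2) = 0 from rfl, isCoprime_zero_right, lift_apply_apply] at this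
  have hunit : ∀ a : ZMod 2, IsUnit a → a = 1 := by decide
  rw [← ZMod.intCast_eq_one_iff_odd, Int.cast_add, Int.cast_mul, mul_comm]
  exact hunit _ this

theorem two_dvd_mul_self_sub_one {z : ℤ√d} (hz : Odd (z.re + d * z.im)) : 2 ∣ z * z - 1 := by
  obtain ⟨k, hk⟩ := hz
  obtain ⟨j, hj⟩ := Int.even_mul_pred_self d
  rw [show (2 : ℤ√d) = ((2 : ℤ) : ℤ√d) by norm_cast, intCast_dvd]
  simp only [re_sub, re_mul, re_one, im_sub, im_mul, im_one]
  refine ⟨⟨2 * k * k + 2 * k - d * z.re * z.im - j * z.im * z.im, ?_⟩, ⟨z.re * z.im, by ring⟩⟩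
  -- `re² + d im² ≡ (re + d im)² (mod 2)`, as `2 ∣ d (d - 1)`
  linear_combination (z.re + d * z.im + 2 * k + 1) * hk - z.im * z.im * hj

end Zsqrtd

namespace Subring

variable {R : Type*} [CommRing R] {S : Subring R} {c : S}

theorem mem_of_mul_mem_of_dvd_mul_self_sub_one (hc : ∀ r : R, (c : R) * r ∈ S) {g r : R}
    (hg : g ∈ S) (hgc : (c : R) ∣ g * g - 1) (hgr : g * r ∈ S) : r ∈ S := by
  obtain ⟨t, ht⟩ := hgc
  have hr : r = g * (g * r) - c * (t * r) := by linear_combination (-r) * ht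
  rw [hr]
  exact S.sub_mem (S.mul_mem hg hgr) (hc _)

theorem comap_map_subtype_eq_of_sup_span_eq_top (hc : ∀ r : R, (c : R) * r ∈ S)
    {I : Ideal S} (hI : I ⊔ Ideal.span {c} = ⊤) : (I.map S.subtype).comap S.subtype = I := by
  refine le_antisymm (fun y hy => ?_) Ideal.le_comap_map
  have hcI : ∀ z ∈ I.map S.subtype, ∀ r : R, (⟨c * (r * z), hc _⟩ : S) ∈ I := by
    intro z hz
    induction hz using Submodule.span_induction with
    | mem z hz =>
      obtain ⟨i, hi, rfl⟩ := hz
      intro r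
      convert I.mul_mem_left ⟨c * r, hc r⟩ hi using 1
      ext; simp [mul_assoc]
    | zero => intro r; convert I.zero_mem using 1; ext; simp
    | add z w _ _ hz hw =>
      intro r
      convert I.add_mem (hz r) (hw r) using 1
      ext; simp [mul_add]
    | smul s z _ hz =>
      intro r
      convert hz (r * s) using 1
      ext; simp [mul_assoc]
  obtain ⟨a, ha, b, hb, hab⟩ := Submodule.mem_sup.mp (hI ▸ Submodule.mem_top : (1 : S) ∈ I ⊔ _)
  obtain ⟨w, rfl⟩ := Ideal.mem_span_singleton'.mp hb
  have hy' : y = y * a + ⟨c * (w * y), hc _⟩ := by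
    have h := congrArg (fun s : S => (y : R) * s) hab
    ext
    simp only [Subring.coe_add, Subring.coe_mul, OneMemClass.coe_one, mul_one] at h ⊢
    linear_combination -h
  rw [hy']
  exact I.add_mem (I.mul_mem_left y ha) (hcI _ hy w)

theorem isCoprime_of_map_subtype_eq_span {I : Ideal S} (hI : I ⊔ Ideal.span {c} = ⊤) {x : R}
    (hx : I.map S.subtype = Ideal.span {x}) : IsCoprime x (c : R) := by
  have hc : (Ideal.span {c}).map S.subtype = Ideal.span {(c : R)} := by
    rw [Ideal.map_span, Set.image_singleton, coe_subtype]
  rw [← Ideal.isCoprime_span_singleton_iff, Ideal.isCoprime_iff_sup_eq, ← hx, ← hc,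
    ← Ideal.map_sup, hI, Ideal.map_top]

theorem eq_span_singleton_of_map_subtype_eq (hc : ∀ r : R, (c : R) * r ∈ S) {I : Ideal S}
    (hI : I ⊔ Ideal.span {c} = ⊤) {g : S} (hg : I.map S.subtype = Ideal.span {(g : R)})
    (hgc : (c : R) ∣ g * g - 1) : I = Ideal.span {g} := by
  refine le_antisymm (fun y hy => ?_) ((Ideal.span_singleton_le_iff_mem I).mpr ?_)
  · obtain ⟨t, ht⟩ := Ideal.mem_span_singleton'.mp (hg ▸ Ideal.mem_map_of_mem S.subtype hy)
    have htS : t ∈ S :=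
      mem_of_mul_mem_of_dvd_mul_self_sub_one hc g.2 hgc (by rw [mul_comm, ht]; exact y.2)
    exact Ideal.mem_span_singleton'.mpr ⟨⟨t, htS⟩, Subtype.ext ht⟩
  · rw [← comap_map_subtype_eq_of_sup_span_eq_top hc hI, Ideal.mem_comap, hg]
    exact Ideal.mem_span_singleton_self _

end Subring

namespace Rng

theorem odd_of_isCoprime_two {x : Rng} (hx : IsCoprime x 2) :
    Odd x.1 ∧ Odd (x.2.1.re + 2 * x.2.1.im) ∧ Odd (x.2.2.re + 3 * x.2.2.im) :=
  ⟨Int.isCoprime_two_right.mp (by simpa using hx.map (RingHom.fst _ _)),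
    Zsqrtd.odd_re_add_mul_im_of_isCoprime_two
      (by simpa using hx.map ((RingHom.fst _ _).comp (RingHom.snd _ _))),
    Zsqrtd.odd_re_add_mul_im_of_isCoprime_two
      (by simpa using hx.map ((RingHom.snd _ _).comp (RingHom.snd _ _)))⟩

theorem two_dvd_mul_self_sub_one {x : Rng} (hx : IsCoprime x 2) : 2 ∣ x * x - 1 := by
  obtain ⟨h₁, h₂, h₃⟩ := odd_of_isCoprime_two hx
  refine prod_dvd_iff.mpr ⟨?_, prod_dvd_iff.mpr ⟨?_, ?_⟩⟩
  · exact even_iff_two_dvd.mp ((h₁.mul h₁).sub_odd odd_one)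
  · exact Zsqrtd.two_dvd_mul_self_sub_one h₂
  · exact Zsqrtd.two_dvd_mul_self_sub_one h₃

end Rng

namespace W

theorem two_mul_mem (r : Rng) : 2 * r ∈ W := by
  simp [mem_W_iff, Wset, Int.ModEq]

theorem exists_isUnit_mul_mem {x : Rng} (hx : IsCoprime x 2) :
    ∃ u : Rng, IsUnit u ∧ x * u ∈ W := by
  obtain ⟨h₁, h₂, h₃⟩ := Rng.odd_of_isCoprime_two hx
  rw [Int.odd_iff] at h₁ h₂ h₃
  by_cases h : x.2.1.im % 2 = x.2.2.im % 2
  · refine ⟨1, isUnit_one, ?_⟩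
    simp only [mul_one, mem_W_iff, Wset, Set.mem_ofPred_eq, Int.ModEq]
    omega
  · refine ⟨(1, ⟨1, 1⟩, 1), ?_, ?_⟩
    · simp [Prod.isUnit_iff, Zsqrtd.isUnit_iff_norm_isUnit, Zsqrtd.norm_def]
    · simp [mem_W_iff, Wset, Int.ModEq, Zsqrtd.re_mul, Zsqrtd.im_mul]
      omega

theorem isPrincipal_of_sup_span_two_eq_top {I : Ideal W} (hI : I ⊔ Ideal.span {2} = ⊤) :
    I.IsPrincipal := by
  obtain ⟨x, hx⟩ := (IsPrincipalIdealRing.principal (I.map W.subtype)).principal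
  obtain ⟨u, hu, hxu⟩ := exists_isUnit_mul_mem (Subring.isCoprime_of_map_subtype_eq_span hI hx)
  have hg : I.map W.subtype = Ideal.span {x * u} := by
    rw [Ideal.span_singleton_mul_right_unit hu]; exact hx
  exact ⟨⟨x * u, hxu⟩, Subring.eq_span_singleton_of_map_subtype_eq two_mul_mem hI hg
    (Rng.two_dvd_mul_self_sub_one (Subring.isCoprime_of_map_subtype_eq_span hI hg))⟩

end W

/-- Every maximal ideal of `W` of odd residue characteristic is principal: if `m` is a
maximal ideal of `W` not containing the element `2 = (2,2,2)` of `W`, then `m` is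
principal. -/
theorem stmt4 (m : Ideal W) (hm : m.IsMaximal) (h2 : (2 : W) ∉ m) :
    m.IsPrincipal :=
  W.isPrincipal_of_sup_span_two_eq_top <| codisjoint_iff.mp <|
    hm.out.not_le_iff_codisjoint.mp (by rwa [Ideal.span_singleton_le_iff_mem])
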